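/- Let c and c̃ both satisfy the cost assumptions (even, strictly convex, c(0) = c̃(0) = 0, strictly increasing on [0,∞)), and suppose c̃ cost-dominates c: for all 0 ≤ x₁ < x₂, c̃(x₂) - c̃(x₁) > c(x₂) - c(x₁). Fix any bounded function G : [0,1] → ℝ and p ≤ 1/2, and let p*_c be a maximizer of p' ↦ G(p') - c(p' - p) over [p, 1/2] and p*_{c̃} a maximizer of p' ↦ G(p') - c̃(p' - p) over [p, 1/2]. Then p*_{c̃} ≤ p*_c. -/

import Mathlib

/-! Revealed preference: if the costlier optimum `pct` lay strictly beyond `pc`, then moving from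
`pc` up to `pct` would gain at least as much under `c̃` as under `c` (both optima are weakly
preferred to the other point), contradicting that `c̃` charges strictly more for that increment. -/

theorem IsMaxOn.le_of_increments_lt {α β : Type*} [LinearOrder α]
    [AddCommGroup β] [LinearOrder β] [IsOrderedAddMonoid β]
    {f g : α → β} {s : Set α} {x y : α} (hfx : IsMaxOn f s x) (hx : x ∈ s) (hy : y ∈ s)
    (hgy : IsMaxOn g s y) (hinc : ∀ a ∈ s, ∀ b ∈ s, a < b → g b - g a < f b - f a) :
    y ≤ x := by
  by_contra! hxy
  have hf : f y - f x ≤ 0 := sub_nonpos.mpr (hfx hy)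
  have hg : 0 ≤ g y - g x := sub_nonneg.mpr (hgy hx)
  exact lt_irrefl _ ((hf.trans hg).trans_lt (hinc x hx y hy hxy))

theorem costlier_smaller_move
    (c ct : ℝ → ℝ) (G : ℝ → ℝ) (p pc pct : ℝ)
    (hdom : ∀ x₁ x₂ : ℝ, 0 ≤ x₁ → x₁ < x₂ → c x₂ - c x₁ < ct x₂ - ct x₁)
    (hpc : pc ∈ Set.Icc p (1 / 2) ∧
        IsMaxOn (fun p' => G p' - c (p' - p)) (Set.Icc p (1 / 2)) pc)
    (hpct : pct ∈ Set.Icc p (1 / 2) ∧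
        IsMaxOn (fun p' => G p' - ct (p' - p)) (Set.Icc p (1 / 2)) pct) :
    pct ≤ pc := by
  refine hpc.2.le_of_increments_lt hpc.1 hpct.1 hpct.2 fun a ha b _ hab => ?_
  have := hdom (a - p) (b - p) (sub_nonneg.mpr ha.1) (sub_lt_sub_right hab p)
  linarith
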